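/- Let G be a directed graph on vertex set {1,…,n} with nonnegative edge weights. Construct G' by adding vertices s, a_1,…,a_n, b_1,…,b_n, edges (a_i,s) and (s,b_i) of weight 0 for all i, and edges (a_i,i) and (i,b_i) of weight 1 for all i. Then for all i,j, the shortest simple path from a_i to b_j in G' is a_i → s → b_j of weight 0, and the second simple shortest path from a_i to b_j has weight 2 + d(i,j), where d(i,j) is the shortest-path distance from i to j in G (when a path from i to j exists in G). -/

import Mathlib

/-- Weight of a path given as a list of vertices: sum of edge weights of consecutive pairs. -/
def pathWt {α : Type*} {M : Type*} [AddCommMonoid M] (w : α → α → M) (p : List α) : M :=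
  ((p.zip p.tail).map fun e => w e.1 e.2).sum

/-- `p` is a simple path from `u` to `v` in the directed graph with adjacency `Adj`. -/
def IsSimplePath {α : Type*} (Adj : α → α → Prop) (u v : α) (p : List α) : Prop :=
  p.Chain' Adj ∧ p.head? = some u ∧ p.getLast? = some v ∧ p.Nodup

/-- `p` is a simple cycle through `x` (written `x :: ... :: x`). -/
def IsSimpleCycleThrough {α : Type*} (Adj : α → α → Prop) (x : α) (p : List α) : Prop :=
  p.Chain' Adj ∧ p.head? = some x ∧ p.getLast? = some x ∧ 2 ≤ p.length ∧ p.dropLast.Nodup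

/-- `f` enumerates the `k` smallest-weight elements of the set `S` of paths,
in nondecreasing order of weight. -/
def KSmallestIn {α M : Type*} [AddCommMonoid M] [Preorder M]
    (w : α → α → M) (S : Set (List α)) {k : ℕ} (f : Fin k → List α) : Prop :=
  (∀ i, f i ∈ S) ∧ Function.Injective f ∧
  (Monotone fun i => pathWt w (f i)) ∧
  (∀ p ∈ S, p ∉ Set.range f → ∀ i, pathWt w (f i) ≤ pathWt w p)

/-- Vertices of `G'`: original vertices `Sum.inl v`, `a_i = Sum.inr (Sum.inl i)`,
`b_i = Sum.inr (Sum.inr (Sum.inl i))`, and `s = Sum.inr (Sum.inr (Sum.inr ()))`. -/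
abbrev V10 (n : ℕ) := Fin n ⊕ (Fin n ⊕ (Fin n ⊕ Unit))

def aV {n : ℕ} (i : Fin n) : V10 n := Sum.inr (Sum.inl i)
def bV {n : ℕ} (i : Fin n) : V10 n := Sum.inr (Sum.inr (Sum.inl i))
def sV {n : ℕ} : V10 n := Sum.inr (Sum.inr (Sum.inr ()))

/-- Adjacency of `G'`: `G` plus edges `(a_i,s)`, `(s,b_i)` of weight 0 and
`(a_i,i)`, `(i,b_i)` of weight 1. -/
def adj10 (n : ℕ) (Adj : Fin n → Fin n → Prop) : V10 n → V10 n → Prop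
  | Sum.inl u, Sum.inl v => Adj u v
  | Sum.inr (Sum.inl _), Sum.inr (Sum.inr (Sum.inr _)) => True
  | Sum.inr (Sum.inr (Sum.inr _)), Sum.inr (Sum.inr (Sum.inl _)) => True
  | Sum.inr (Sum.inl i), Sum.inl v => v = i
  | Sum.inl v, Sum.inr (Sum.inr (Sum.inl i)) => v = i
  | _, _ => False

def wt10 (n : ℕ) (w : Fin n → Fin n → ℝ) : V10 n → V10 n → ℝ
  | Sum.inl u, Sum.inl v => w u v
  | Sum.inr (Sum.inl _), Sum.inl _ => 1
  | Sum.inl _, Sum.inr (Sum.inr (Sum.inl _)) => 1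
  | _, _ => 0

section Aux

variable {α : Type*}

lemma pathWt_cons_cons {M : Type*} [AddCommMonoid M] (w : α → α → M) (x y : α) (l : List α) :
    pathWt w (x :: y :: l) = w x y + pathWt w (y :: l) := by
  simp [pathWt]

lemma pathWt_nonneg (w : α → α → ℝ) (h : ∀ u v, 0 ≤ w u v) (l : List α) :
    0 ≤ pathWt w l := by
  apply List.sum_nonneg
  intro x hx
  simp only [List.mem_map] at hx
  obtain ⟨e, _, rfl⟩ := hx
  exact h e.1 e.2

lemma wt10_nonneg (n : ℕ) (w : Fin n → Fin n → ℝ) (hw : ∀ u v, 0 ≤ w u v) :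
    ∀ u v, 0 ≤ wt10 n w u v := by
  rintro (u | u | u | u) (v | v | v | v) <;> simp [wt10] <;> exact hw _ _

lemma wt_lift (n : ℕ) (w : Fin n → Fin n → ℝ) (j : Fin n) :
    ∀ (p : List (Fin n)), p.getLast? = some j →
      pathWt (wt10 n w) (p.map Sum.inl ++ [bV j]) = pathWt w p + 1
  | [], h => by simp at h
  | [u], h => by
      simp at h; subst h
      simp [pathWt, wt10, bV]
  | u :: v :: p, h => by
      rw [List.getLast?_cons_cons] at h
      have ih := wt_lift n w j (v :: p) h
      simp only [List.map_cons, List.cons_append] at ih ⊢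
      rw [pathWt_cons_cons, pathWt_cons_cons, ih]
      show w u v + _ = w u v + _ + 1
      ring

lemma wt_full (n : ℕ) (w : Fin n → Fin n → ℝ) (i j : Fin n) (p : List (Fin n))
    (hh : p.head? = some i) (hl : p.getLast? = some j) :
    pathWt (wt10 n w) (aV i :: (p.map Sum.inl ++ [bV j])) = 2 + pathWt w p := by
  match p, hh with
  | u :: p', hh =>
    simp only [List.head?_cons, Option.some.injEq] at hh
    subst hh
    simp only [List.map_cons, List.cons_append]
    rw [pathWt_cons_cons]
    have := wt_lift n w j (u :: p') hl
    simp only [List.map_cons, List.cons_append] at this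
    rw [this]
    show (1 : ℝ) + _ = 2 + _
    ring

lemma lift_simple (n : ℕ) (Adj : Fin n → Fin n → Prop) (i j : Fin n)
    (p : List (Fin n)) (hp : IsSimplePath Adj i j p) :
    IsSimplePath (adj10 n Adj) (aV i) (bV j) (aV i :: (p.map Sum.inl ++ [bV j])) := by
  obtain ⟨hc, hh, hl, hnd⟩ := hp
  rcases p with _ | ⟨u, p'⟩
  · simp at hh
  obtain rfl : u = i := by simpa using hh
  refine ⟨?_, by simp, ?_, ?_⟩
  · -- chain
    simp only [List.Chain']
    rw [List.isChain_cons]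
    constructor
    · intro y hy
      simp only [List.map_cons, List.cons_append, List.head?_cons, Option.mem_def,
        Option.some.injEq] at hy
      subst hy
      show adj10 n Adj (aV u) (Sum.inl u)
      simp [adj10, aV]
    · rw [List.isChain_append]
      refine ⟨?_, by simp, ?_⟩
      · rw [List.isChain_map]
        exact hc
      · intro x hx y hy
        simp only [List.head?_cons, Option.mem_def, Option.some.injEq] at hy
        subst hy
        rw [List.getLast?_map] at hx
        simp only [Option.mem_def, Option.map_eq_some_iff] at hx
        obtain ⟨a, ha, rfl⟩ := hx
        rw [hl] at ha
        cases ha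
        show adj10 n Adj (Sum.inl j) (bV j)
        simp [adj10, bV]
  · -- getLast?
    show ((aV u :: List.map Sum.inl (u :: p')) ++ [bV j]).getLast? = some (bV j)
    rw [List.getLast?_concat]
  · -- nodup
    simp only [List.nodup_cons, List.mem_append, List.mem_map, List.mem_singleton]
    refine ⟨?_, ?_⟩
    · rintro (⟨a, _, ha⟩ | ha) <;> simp [aV, bV] at ha
    · rw [List.nodup_append]
      refine ⟨List.Nodup.map Sum.inl_injective hnd, by simp, ?_⟩
      intro x hx1 hx2
      simp only [List.mem_map] at hx1
      obtain ⟨a, _, rfl⟩ := hx1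
      intro hb; simp only [List.mem_singleton] at hb; subst hb; simp [bV]

lemma seg (n : ℕ) (Adj : Fin n → Fin n → Prop) (j : Fin n) :
    ∀ (r : List (V10 n)) (u : Fin n), r.Chain' (adj10 n Adj) →
      r.head? = some (Sum.inl u) → r.getLast? = some (bV j) →
      ∃ p : List (Fin n), p.head? = some u ∧ p.getLast? = some j ∧
        p.Chain' Adj ∧ r = p.map Sum.inl ++ [bV j]
  | [], u, _, hh, _ => by simp at hh
  | [x], u, _, hh, hl => by
      simp only [List.head?_cons, Option.some.injEq] at hh
      simp only [List.getLast?_singleton, Option.some.injEq] at hl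
      subst hh; simp [bV] at hl
  | x :: y :: r, u, hc, hh, hl => by
      simp only [List.head?_cons, Option.some.injEq] at hh
      subst hh
      simp only [List.Chain'] at hc
      rw [List.isChain_cons_cons] at hc
      obtain ⟨hadj, hc⟩ := hc
      rw [List.getLast?_cons_cons] at hl
      match y, hadj with
      | Sum.inl v, hadj =>
        obtain ⟨p, hph, hpl, hpc, hpe⟩ := seg n Adj j (Sum.inl v :: r) v hc (by simp) hl
        refine ⟨u :: p, by simp, ?_, ?_, by simp [hpe]⟩
        · rw [← hpl]
          match p, hph with
          | a :: p', _ => rw [List.getLast?_cons_cons]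
        · simp only [List.Chain']
          rw [List.isChain_cons]
          refine ⟨?_, hpc⟩
          intro z hz
          rw [hph] at hz
          cases hz
          exact hadj
      | Sum.inr (Sum.inr (Sum.inl k)), hadj =>
        -- edge inl u -> bV k means u = k; then r = []
        have huk : u = k := hadj
        subst huk
        match r, hc, hl with
        | [], _, hl =>
          simp only [List.getLast?_singleton, Option.some.injEq] at hl
          have : u = j := by
            simpa [bV, Sum.inr.injEq, Sum.inl.injEq] using hl
          subst this
          exact ⟨[u], by simp, by simp, by simp [List.Chain'], by simp [bV]⟩
        | z :: r', hc, _ =>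
          rw [List.isChain_cons_cons] at hc
          rcases z with z | z | z | z <;> exact absurd hc.1 (by simp [adj10])
lemma structure_q (n : ℕ) (Adj : Fin n → Fin n → Prop) (i j : Fin n)
    (q : List (V10 n)) (hq : IsSimplePath (adj10 n Adj) (aV i) (bV j) q)
    (hne : q ≠ [aV i, sV, bV j]) :
    ∃ p : List (Fin n), IsSimplePath Adj i j p ∧ q = aV i :: (p.map Sum.inl ++ [bV j]) := by
  obtain ⟨hc, hh, hl, hnd⟩ := hq
  rcases q with _ | ⟨x, t⟩
  · simp at hh
  obtain rfl : x = aV i := by simpa using hh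
  rcases t with _ | ⟨y, t'⟩
  · simp only [List.getLast?_singleton, Option.some.injEq] at hl
    simp [aV, bV] at hl
  simp only [List.Chain'] at hc
  rw [List.isChain_cons_cons] at hc
  obtain ⟨hadj, hc⟩ := hc
  rw [List.getLast?_cons_cons] at hl
  match y, hadj with
  | Sum.inl v, hadj =>
    have hv : v = i := hadj
    subst hv
    obtain ⟨p, hph, hpl, hpc, hpe⟩ := seg n Adj j (Sum.inl v :: t') v hc (by simp) hl
    rw [hpe] at hnd ⊢
    refine ⟨p, ⟨hpc, hph, hpl, ?_⟩, rfl⟩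
    have h2 := (List.nodup_cons.mp hnd).2
    exact ((List.nodup_append.mp h2).1).of_map _
  | Sum.inr (Sum.inl k), hadj => exact hadj.elim
  | Sum.inr (Sum.inr (Sum.inl k)), hadj => exact hadj.elim
  | Sum.inr (Sum.inr (Sum.inr u)), _ =>
    rcases t' with _ | ⟨z, t''⟩
    · simp only [List.getLast?_singleton, Option.some.injEq] at hl
      simp [bV] at hl
    rw [List.isChain_cons_cons] at hc
    obtain ⟨hadj2, hc2⟩ := hc
    rw [List.getLast?_cons_cons] at hl
    match z, hadj2 with
    | Sum.inl v, hadj2 => exact hadj2.elim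
    | Sum.inr (Sum.inl k), hadj2 => exact hadj2.elim
    | Sum.inr (Sum.inr (Sum.inr u2)), hadj2 => exact hadj2.elim
    | Sum.inr (Sum.inr (Sum.inl k)), _ =>
      rcases t'' with _ | ⟨zz, t3⟩
      · simp only [List.getLast?_singleton, Option.some.injEq] at hl
        have hk : k = j := by
          simpa [bV] using hl
        subst hk
        exact absurd rfl hne
      · rw [List.isChain_cons_cons] at hc2
        rcases zz with z2|z2|z2|z2 <;> exact absurd hc2.1 (by simp [adj10])

end Aux

/-- The shortest simple path from `a_i` to `b_j` in `G'` is `a_i → s → b_j` of weight 0,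
and the second simple shortest path from `a_i` to `b_j` has weight `2 + d(i,j)`, where
`d(i,j)` is the minimum weight of a simple path from `i` to `j` in `G`. -/
theorem stmt10 (n : ℕ) (Adj : Fin n → Fin n → Prop) (w : Fin n → Fin n → ℝ)
    (hw : ∀ u v, 0 ≤ w u v) (i j : Fin n) (hij : i ≠ j)
    (hex : ∃ p : List (Fin n), IsSimplePath Adj i j p) :
    (IsSimplePath (adj10 n Adj) (aV i) (bV j) [aV i, sV, bV j] ∧
     pathWt (wt10 n w) ([aV i, sV, bV j] : List (V10 n)) = 0 ∧
     (∀ q : List (V10 n), IsSimplePath (adj10 n Adj) (aV i) (bV j) q →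
       pathWt (wt10 n w) ([aV i, sV, bV j] : List (V10 n)) ≤ pathWt (wt10 n w) q)) ∧
    (∀ q : List (V10 n), IsSimplePath (adj10 n Adj) (aV i) (bV j) q →
      q ≠ [aV i, sV, bV j] →
      (∀ q' : List (V10 n), IsSimplePath (adj10 n Adj) (aV i) (bV j) q' →
        q' ≠ [aV i, sV, bV j] → pathWt (wt10 n w) q ≤ pathWt (wt10 n w) q') →
      ∃ p : List (Fin n), IsSimplePath Adj i j p ∧
        (∀ p' : List (Fin n), IsSimplePath Adj i j p' → pathWt w p ≤ pathWt w p') ∧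
        pathWt (wt10 n w) q = 2 + pathWt w p) := by
  have hwt := wt10_nonneg n w hw
  have hw0 : pathWt (wt10 n w) ([aV i, sV, bV j] : List (V10 n)) = 0 := by
    simp [pathWt, wt10, aV, sV, bV]
  constructor
  · refine ⟨⟨?_, rfl, rfl, ?_⟩, hw0, ?_⟩
    · simp [aV, sV, bV, adj10, List.Chain']
    · simp [aV, sV, bV]
    · intro q hq
      rw [hw0]
      exact pathWt_nonneg _ hwt q
  · intro q hq hne hmin
    obtain ⟨p, hp, rfl⟩ := structure_q n Adj i j q hq hne
    refine ⟨p, hp, ?_, wt_full n w i j p hp.2.1 hp.2.2.1⟩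
    intro p' hp'
    have hne' : aV i :: (p'.map Sum.inl ++ [bV j]) ≠ [aV i, sV, bV j] := by
      obtain ⟨_, hh', _, _⟩ := hp'
      rcases p' with _ | ⟨u, p''⟩
      · simp at hh'
      intro hcontra
      simp only [List.map_cons, List.cons_append, List.cons.injEq] at hcontra
      exact absurd hcontra.2.1 (by simp [sV])
    have h1 := hmin _ (lift_simple n Adj i j p' hp') hne'
    rw [wt_full n w i j p hp.2.1 hp.2.2.1,
        wt_full n w i j p' hp'.2.1 hp'.2.2.1] at h1
    linarith
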